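/- arXiv:math/0611118 — 5 statements merged into one kernel-verified Lean document; each statement's English description precedes it below -/
import Mathlib

section
/- Tripod metric comparison: Let X be a metric space containing a tripod T consisting of ε-geodesics α, β, γ with α ∪ β an ε-geodesic from x to y through the common point o, γ an ε-geodesic from z to o, and o an ε-nearest point on α ∪ β to z. Let d_mod denote the path (tree) metric on the abstract model tripod T_mod with legs of the same lengths, and let d denote the pullback of the metric of X under the natural map τ : T_mod → T. Then for all points A, B ∈ T_mod: d(A,B) ≤ d_mod(A,B) ≤ 3 d(A,B) + 6ε. -/
/-- Tripod metric comparison: for a tripod in `X` made of `ε`-geodesic legs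
`leg 0` (= α), `leg 1` (= β), `leg 2` (= γ), each parameterized by arc length
from the common center `o`, where `α ∪ β` is an `ε`-geodesic and `o` is an
`ε`-nearest point of `α ∪ β` to the far endpoint of `γ`, the pullback metric
`d` and the model tree metric `d_mod` on the model tripod satisfy
`d ≤ d_mod ≤ 3 d + 6ε`.  Here, for points at arc-length parameters `s`, `t` on
legs `i`, `j`, `d_mod = |s - t|` if `i = j` and `d_mod = s + t` otherwise. -/
theorem tripod_metric_comparison (X : Type*) [MetricSpace X]
    (ε : ℝ) (hε : 0 ≤ ε) (l : Fin 3 → ℝ) (hl : ∀ i, 0 ≤ l i)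
    (leg : Fin 3 → ℝ → X)
    (hcenter : leg 0 0 = leg 1 0 ∧ leg 1 0 = leg 2 0)
    (μ : ℝ → X) (hμdef : ∀ t : ℝ, μ t = if t ≤ 0 then leg 0 (-t) else leg 1 t)
    -- `α ∪ β` is an `ε`-geodesic from `x = leg 0 (l 0)` to `y = leg 1 (l 1)`,
    -- parameterized by arc length on `[-(l 0), l 1]`:
    (hμ : ∀ s t : ℝ, -(l 0) ≤ s → s ≤ t → t ≤ l 1 →
      dist (μ s) (μ t) ≤ t - s ∧ t - s ≤ dist (μ s) (μ t) + ε)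
    -- `γ` is an `ε`-geodesic parameterized by arc length on `[0, l 2]`:
    (hγ : ∀ s t : ℝ, 0 ≤ s → s ≤ t → t ≤ l 2 →
      dist (leg 2 s) (leg 2 t) ≤ t - s ∧ t - s ≤ dist (leg 2 s) (leg 2 t) + ε)
    -- `o = μ 0` is an `ε`-nearest point of `α ∪ β` to `z = leg 2 (l 2)`:
    (hproj : ∀ w : ℝ, -(l 0) ≤ w → w ≤ l 1 →
      dist (leg 2 (l 2)) (μ 0) ≤ dist (leg 2 (l 2)) (μ w) + ε) :
    ∀ (i j : Fin 3) (s t : ℝ), 0 ≤ s → s ≤ l i → 0 ≤ t → t ≤ l j →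
      dist (leg i s) (leg j t) ≤ (if i = j then |s - t| else s + t) ∧
      (if i = j then |s - t| else s + t) ≤ 3 * dist (leg i s) (leg j t) + 6 * ε := by
  obtain ⟨hc1, hc2⟩ := hcenter
  have hμ0 : μ 0 = leg 1 0 := by rw [hμdef]; simp [hc1]
  have hμneg : ∀ s : ℝ, 0 ≤ s → μ (-s) = leg 0 s := by
    intro s hs
    rw [hμdef, if_pos (by linarith), neg_neg]
  have hμpos : ∀ t : ℝ, 0 ≤ t → μ t = leg 1 t := by
    intro t ht
    rcases lt_or_eq_of_le ht with h | h
    · rw [hμdef, if_neg (by linarith)]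
    · rw [← h, hμ0]
  have hl0 := hl 0; have hl1 := hl 1; have hl2 := hl 2
  have hgeo : ∀ i : Fin 3, ∀ s t : ℝ, 0 ≤ s → s ≤ t → t ≤ l i →
      dist (leg i s) (leg i t) ≤ t - s ∧ t - s ≤ dist (leg i s) (leg i t) + ε := by
    intro i
    have hi : i = 0 ∨ i = 1 ∨ i = 2 := by omega
    rcases hi with rfl | rfl | rfl
    · intro s t hs hst htl
      have h := hμ (-t) (-s) (by linarith) (by linarith) (by linarith)
      rw [hμneg t (by linarith), hμneg s hs, dist_comm] at h
      constructor <;> linarith [h.1, h.2]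
    · intro s t hs hst htl
      have h := hμ s t (by linarith) hst htl
      rw [hμpos s hs, hμpos t (by linarith)] at h
      constructor <;> linarith [h.1, h.2]
    · intro s t hs hst htl
      exact hγ s t hs hst htl
  have hsame : ∀ i : Fin 3, ∀ s t : ℝ, 0 ≤ s → s ≤ l i → 0 ≤ t → t ≤ l i →
      dist (leg i s) (leg i t) ≤ |s - t| ∧
      |s - t| ≤ 3 * dist (leg i s) (leg i t) + 6 * ε := by
    intro i s t hs hsl ht htl
    have hd : (0 : ℝ) ≤ dist (leg i s) (leg i t) := dist_nonneg
    rcases le_total s t with h | h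
    · have h2 := hgeo i s t hs h htl
      rw [abs_of_nonpos (by linarith)]
      constructor <;> linarith [h2.1, h2.2]
    · have h2 := hgeo i t s ht h hsl
      rw [dist_comm (leg i t)] at h2
      rw [abs_of_nonneg (by linarith)]
      constructor <;> linarith [h2.1, h2.2]
  have key : ∀ w s t : ℝ, 0 ≤ t → t ≤ l 2 → -(l 0) ≤ w → w ≤ l 1 → |w| = s →
      dist (μ w) (leg 2 t) ≤ s + t ∧ s + t ≤ 3 * dist (μ w) (leg 2 t) + 6 * ε := by
    intro w s t ht htl hw1 hw2 hws
    have hs : 0 ≤ s := hws ▸ abs_nonneg w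
    have hAo : dist (μ w) (μ 0) ≤ s ∧ s ≤ dist (μ w) (μ 0) + ε := by
      rcases le_total 0 w with h | h
      · have h2 := hμ 0 w (by linarith) h hw2
        have habs : |w| = w := abs_of_nonneg h
        rw [dist_comm (μ 0)] at h2
        constructor <;> linarith [h2.1, h2.2]
      · have h2 := hμ w 0 hw1 h (by linarith)
        have habs : |w| = -w := abs_of_nonpos h
        constructor <;> linarith [h2.1, h2.2]
    have hBo := hγ 0 t le_rfl ht htl
    have hzB := hγ t (l 2) ht htl le_rfl
    have hzo := hγ 0 (l 2) le_rfl hl2 le_rfl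
    have hpr := hproj w hw1 hw2
    have ho : leg 2 0 = μ 0 := by rw [hμ0, hc2]
    rw [ho] at hBo hzo
    have tri1 : dist (μ w) (leg 2 t) ≤ dist (μ w) (μ 0) + dist (μ 0) (leg 2 t) :=
      dist_triangle _ _ _
    have tri2 : dist (leg 2 (l 2)) (μ w) ≤
        dist (leg 2 (l 2)) (leg 2 t) + dist (leg 2 t) (μ w) := dist_triangle _ _ _
    have tri3 : dist (μ w) (μ 0) ≤ dist (μ w) (leg 2 t) + dist (leg 2 t) (μ 0) :=
      dist_triangle _ _ _
    have c1 : dist (leg 2 (l 2)) (leg 2 t) = dist (leg 2 t) (leg 2 (l 2)) := dist_comm _ _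
    have c2 : dist (leg 2 t) (μ w) = dist (μ w) (leg 2 t) := dist_comm _ _
    have c3 : dist (leg 2 t) (μ 0) = dist (μ 0) (leg 2 t) := dist_comm _ _
    have c4 : dist (leg 2 (l 2)) (μ 0) = dist (μ 0) (leg 2 (l 2)) := dist_comm _ _
    have hd : (0 : ℝ) ≤ dist (μ w) (leg 2 t) := dist_nonneg
    constructor
    · linarith [hAo.1, hBo.1]
    · linarith [hAo.2, hBo.1, hzB.1, hzo.2]
  intro i j s t hs hsl ht htl
  have hi : i = 0 ∨ i = 1 ∨ i = 2 := by omega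
  have hj : j = 0 ∨ j = 1 ∨ j = 2 := by omega
  rcases hi with rfl | rfl | rfl <;> rcases hj with rfl | rfl | rfl <;>
    simp only [Fin.isValue, show ((0:Fin 3) = 0) = True from by simp,
      show ((1:Fin 3) = 1) = True from by simp, show ((2:Fin 3) = 2) = True from by simp,
      show ((0:Fin 3) = 1) = False from by simp, show ((0:Fin 3) = 2) = False from by simp,
      show ((1:Fin 3) = 0) = False from by simp, show ((1:Fin 3) = 2) = False from by simp,
      show ((2:Fin 3) = 0) = False from by simp, show ((2:Fin 3) = 1) = False from by simp,
      if_true, if_false]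
  · exact hsame 0 s t hs hsl ht htl
  · -- (0,1)
    have h := hμ (-s) t (by linarith) (by linarith) htl
    rw [hμneg s hs, hμpos t ht] at h
    have hd : (0 : ℝ) ≤ dist (leg 0 s) (leg 1 t) := dist_nonneg
    constructor <;> linarith [h.1, h.2]
  · -- (0,2)
    have h := key (-s) s t ht htl (by linarith) (by linarith)
      (by rw [abs_neg, abs_of_nonneg hs])
    rw [hμneg s hs] at h
    exact h
  · -- (1,0)
    have h := hμ (-t) s (by linarith) (by linarith) hsl
    rw [hμneg t ht, hμpos s hs, dist_comm] at h
    have hd : (0 : ℝ) ≤ dist (leg 1 s) (leg 0 t) := dist_nonneg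
    constructor <;> linarith [h.1, h.2]
  · exact hsame 1 s t hs hsl ht htl
  · -- (1,2)
    have h := key s s t ht htl (by linarith) hsl (abs_of_nonneg hs)
    rw [hμpos s hs] at h
    exact h
  · -- (2,0)
    have h := key (-t) t s hs hsl (by linarith) (by linarith)
      (by rw [abs_neg, abs_of_nonneg ht])
    rw [hμneg t ht] at h
    constructor
    · rw [dist_comm]; linarith [h.1]
    · rw [dist_comm]; linarith [h.2]
  · -- (2,1)
    have h := key t t s hs hsl (by linarith) htl (abs_of_nonneg ht)
    rw [hμpos t ht] at h
    constructor
    · rw [dist_comm]; linarith [h.1]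
    · rw [dist_comm]; linarith [h.2]
  · exact hsame 2 s t hs hsl ht htl
end

section
/- In the key case of the tripod comparison: suppose A lies on the leg γ at arc-length distance t from the center o, B lies on leg β at arc-length distance s from o, each leg is an ε-geodesic, o is an ε-nearest point of the ε-geodesic α ∪ β to the endpoint of γ, and t ≥ (t+s)/3. Then t + s ≤ 3 d(τ(A), τ(B)) + 6ε. -/
/-!
Since `A` lies on an `ε`-geodesic from `z` to `o` and `o` is `ε`-nearest to `z` among points
including `B`, going from `z` to `B` through `A` cannot save more than `2ε` over going to `o`;
hence `d(A, o) ≤ d(A, B) + 2ε`. This bounds `t` by `d(A, B) + 3ε`, and via the triangle inequality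
at `A` it bounds `s` by `2 d(A, B) + 3ε`.
-/

section QuasiProjection

variable {X : Type*} [PseudoMetricSpace X] {ε : ℝ} {z o A B : X}

theorem dist_le_dist_add_of_quasi_projection
    (hgeod : dist z A + dist A o ≤ dist z o + ε) (hnear : dist z o ≤ dist z B + ε) :
    dist A o ≤ dist A B + 2 * ε := by
  linarith [dist_triangle z A B]

theorem dist_le_two_mul_dist_add_of_quasi_projection
    (hgeod : dist z A + dist A o ≤ dist z o + ε) (hnear : dist z o ≤ dist z B + ε) :
    dist o B ≤ 2 * dist A B + 2 * ε := by
  linarith [dist_triangle_left o B A, dist_comm A o,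
    dist_le_dist_add_of_quasi_projection hgeod hnear]

end QuasiProjection

theorem tripod_comparison_key_case_general (X : Type*) [MetricSpace X]
    (ε s t : ℝ)
    (z o A B : X)
    -- `A` at arc-length distance `t` from `o` on the `ε`-geodesic `γ` from `z` to `o`:
    (hAo₂ : t ≤ dist A o + ε)
    (hgeod : dist z A + dist A o ≤ dist z o + ε)
    -- `B` at arc-length distance `s` from `o` along the `ε`-geodesic leg `β`:
    (hBo₂ : s ≤ dist o B + ε)
    -- `o` is an `ε`-nearest point of `α ∪ β` to `z`; `B` lies on `α ∪ β`:
    (hnear : dist z o ≤ dist z B + ε) :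
    t + s ≤ 3 * dist A B + 6 * ε := by
  have hA := dist_le_dist_add_of_quasi_projection hgeod hnear
  have hB := dist_le_two_mul_dist_add_of_quasi_projection hgeod hnear
  linarith

/-- Key case of the tripod comparison.  `A` lies on the leg `γ` (an
`ε`-geodesic from `z` to the center `o`) at arc-length distance `t` from `o`,
`B` lies on the leg `β` at arc-length distance `s` from `o`, `o` is an
`ε`-nearest point of the `ε`-geodesic `α ∪ β` to `z` (in particular
`d(z,o) ≤ d(z,B) + ε`), and `t ≥ (t+s)/3`.  Then `t + s ≤ 3 d(A,B) + 6ε`. -/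
theorem tripod_comparison_key_case (X : Type*) [MetricSpace X]
    (ε s t : ℝ) (hε : 0 ≤ ε) (hs : 0 ≤ s) (ht : 0 ≤ t)
    (z o A B : X)
    -- `A` at arc-length distance `t` from `o` on the `ε`-geodesic `γ` from `z` to `o`:
    (hAo₁ : dist A o ≤ t) (hAo₂ : t ≤ dist A o + ε)
    (hgeod : dist z A + dist A o ≤ dist z o + ε)
    -- `B` at arc-length distance `s` from `o` along the `ε`-geodesic leg `β`:
    (hBo₁ : dist o B ≤ s) (hBo₂ : s ≤ dist o B + ε)
    -- `o` is an `ε`-nearest point of `α ∪ β` to `z`; `B` lies on `α ∪ β`: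
    (hnear : dist z o ≤ dist z B + ε)
    (hcase : (t + s) / 3 ≤ t) :
    t + s ≤ 3 * dist A B + 6 * ε :=
  tripod_comparison_key_case_general X ε s t z o A B hAo₂ hgeod hBo₂ hnear
end

section
/- If X is a geodesic metric space that is R-compressed (contains no R-tripod), ρ is a geodesic ray in X emanating from a point O, and x, y are points with d(x, O) ≥ 2R, d(x, ρ) ≤ R, d(y, ρ) > R, then every continuous path from x to y avoiding the ball B(O, 2R) must contain a point z with d(z, ρ) = R and d(z, O) < 2R — a contradiction; hence the R-neighborhood N_R(ρ) minus B(O,2R) is separated from its complement, i.e., N_R(ρ) defines an end of X. -/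
open Set

/-- `X` contains an `R`-tripod: geodesic segments `γ` (of length `a ≥ R`) and
`μ` (of length `b ≥ 2R`) such that `γ ∩ μ` is the endpoint `γ 0 = μ s₀`, the
point `o = μ s₀` is at distance `≥ R` from both endpoints of `μ`, and `o` is a
nearest-point projection on `μ` of every point of `γ`. -/
def HasTripod (X : Type*) [MetricSpace X] (R : ℝ) : Prop :=
  ∃ (a b s₀ : ℝ) (γ μ : ℝ → X),
    R ≤ a ∧ 2 * R ≤ b ∧
    (∀ s t : ℝ, s ∈ Set.Icc 0 a → t ∈ Set.Icc 0 a → dist (γ s) (γ t) = |s - t|) ∧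
    (∀ s t : ℝ, s ∈ Set.Icc 0 b → t ∈ Set.Icc 0 b → dist (μ s) (μ t) = |s - t|) ∧
    s₀ ∈ Set.Icc R (b - R) ∧ γ 0 = μ s₀ ∧
    (γ '' Set.Icc 0 a) ∩ (μ '' Set.Icc 0 b) = {γ 0} ∧
    (∀ s ∈ Set.Icc (0:ℝ) a, ∀ w ∈ Set.Icc (0:ℝ) b,
      dist (γ s) (μ s₀) ≤ dist (γ s) (μ w))

/-- If the geodesic space `X` is `R`-compressed (contains no `R`-tripod),
`ρ` is a geodesic ray from `O = ρ 0`, `x` is a point with `d(x,O) ≥ 2R` and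
`d(x,ρ) ≤ R`, and `y` satisfies `d(y,ρ) > R`, then there is no continuous path
from `x` to `y` avoiding the ball `B(O, 2R)`:  hence `N_R(ρ)` defines an end
of `X`. -/
theorem compressed_ray_neighborhood_is_end (X : Type*) [MetricSpace X]
    (R : ℝ) (hR : 0 < R)
    (hgeodesic : ∀ x y : X, ∃ g : ℝ → X, g 0 = x ∧ g (dist x y) = y ∧
      ∀ s t : ℝ, s ∈ Set.Icc 0 (dist x y) → t ∈ Set.Icc 0 (dist x y) →
        dist (g s) (g t) = |s - t|)
    (hcomp : ¬ HasTripod X R)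
    (ρ : ℝ → X)
    (hρ : ∀ s t : ℝ, 0 ≤ s → 0 ≤ t → dist (ρ s) (ρ t) = |s - t|)
    (x y : X)
    (hxO : 2 * R ≤ dist x (ρ 0))
    (hxρ : Metric.infDist x (ρ '' Set.Ici 0) ≤ R)
    (hyρ : R < Metric.infDist y (ρ '' Set.Ici 0))
    (c : ℝ → X) (hc : ContinuousOn c (Set.Icc 0 1))
    (hc0 : c 0 = x) (hc1 : c 1 = y)
    (havoid : ∀ u ∈ Set.Icc (0:ℝ) 1, 2 * R ≤ dist (c u) (ρ 0)) :
    False := by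
  set S := ρ '' Set.Ici 0 with hS
  have hSne : S.Nonempty := ⟨ρ 0, ⟨0, Set.mem_Ici.2 le_rfl, rfl⟩⟩
  -- use IVT to find z on the path with infDist z S = R
  have hf : ContinuousOn (fun u => Metric.infDist (c u) S) (Set.Icc 0 1) :=
    (Metric.continuous_infDist_pt S).comp_continuousOn hc
  have hmem : R ∈ Set.Icc (Metric.infDist (c 0) S) (Metric.infDist (c 1) S) := by
    constructor
    · rw [hc0]; exact hxρ
    · rw [hc1]; exact le_of_lt hyρ
  obtain ⟨u, hu, hfu⟩ := intermediate_value_Icc zero_le_one hf hmem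
  set z := c u with hz
  have hzρ : Metric.infDist z S = R := hfu
  have hzO : 2 * R ≤ dist z (ρ 0) := havoid u hu
  set D := dist z (ρ 0) with hD
  have hD0 : 0 ≤ D := dist_nonneg
  have hMpos : (0:ℝ) ≤ D + R + 1 := by positivity
  -- ρ is continuous on [0, ∞)
  have hρcont : ContinuousOn ρ (Set.Ici 0) := by
    refine LipschitzOnWith.continuousOn (LipschitzOnWith.of_dist_le_mul (K := 1) ?_)
    intro a ha b hb
    rw [hρ a b ha hb]
    simp [Real.dist_eq, abs_sub_comm]
  have hcont2 : ContinuousOn (fun t => dist z (ρ t)) (Set.Icc 0 (D + R + 1)) :=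
    (continuous_const.dist continuous_id).comp_continuousOn (hρcont.mono (fun t ht => ht.1))
  obtain ⟨t₀, ht₀mem, ht₀min⟩ :=
    isCompact_Icc.exists_isMinOn ⟨0, by constructor <;> [rfl; exact hMpos]⟩ hcont2
  have ht₀0 : 0 ≤ t₀ := ht₀mem.1
  -- dist z (ρ t₀) = R
  have hge : R ≤ dist z (ρ t₀) := by
    rw [← hzρ]
    exact Metric.infDist_le_dist_of_mem ⟨t₀, ht₀0, rfl⟩
  have hle : dist z (ρ t₀) ≤ R := by
    by_contra hlt
    push_neg at hlt
    set m := dist z (ρ t₀) with hm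
    have hr : Metric.infDist z S < min m (R + 1) := by
      rw [hzρ]; exact lt_min hlt (by linarith)
    obtain ⟨p, hpS, hpd⟩ := (Metric.infDist_lt_iff hSne).1 hr
    obtain ⟨t, ht0, rfl⟩ := hpS
    have htle : t ≤ D + R + 1 := by
      have h1 : dist (ρ 0) (ρ t) = t := by
        rw [hρ 0 t le_rfl ht0, abs_sub_comm, sub_zero]; exact abs_of_nonneg ht0
      have h2 : dist (ρ 0) (ρ t) ≤ dist (ρ 0) z + dist z (ρ t) := dist_triangle _ _ _
      have h3 : dist z (ρ t) < R + 1 := lt_of_lt_of_le hpd (min_le_right _ _)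
      rw [h1, dist_comm] at h2
      linarith
    have := ht₀min (Set.mem_Icc.2 ⟨ht0, htle⟩)
    have h4 : dist z (ρ t) < m := lt_of_lt_of_le hpd (min_le_left _ _)
    simp only [Set.mem_setOf_eq] at this
    exact absurd (lt_of_le_of_lt this h4) (lt_irrefl _)
  have hdzt : dist z (ρ t₀) = R := le_antisymm hle hge
  -- t₀ ≥ R
  have ht₀R : R ≤ t₀ := by
    have h1 : dist (ρ 0) (ρ t₀) = t₀ := by
      rw [hρ 0 t₀ le_rfl ht₀0, abs_sub_comm, sub_zero]; exact abs_of_nonneg ht₀0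
    have h2 : dist z (ρ 0) ≤ dist z (ρ t₀) + dist (ρ t₀) (ρ 0) := dist_triangle _ _ _
    rw [dist_comm (ρ t₀) (ρ 0), h1, hdzt] at h2
    linarith
  -- geodesic from ρ t₀ to z
  obtain ⟨g, hg0, hgend, hgiso⟩ := hgeodesic (ρ t₀) z
  have hdg : dist (ρ t₀) z = R := by rw [dist_comm]; exact hdzt
  rw [hdg] at hgend hgiso
  -- points along g are at distance ≥ s from S
  have hkey : ∀ s ∈ Set.Icc (0:ℝ) R, s ≤ Metric.infDist (g s) S := by
    intro s hs
    have hdistz : dist (g s) z = R - s := by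
      rw [← hgend, hgiso s R hs ⟨le_of_lt hR, le_rfl⟩]
      rw [abs_of_nonpos (by linarith [hs.2])]; ring
    have h1 : Metric.infDist z S ≤ Metric.infDist (g s) S + dist z (g s) :=
      Metric.infDist_le_infDist_add_dist
    rw [hzρ, dist_comm z (g s), hdistz] at h1
    linarith
  -- build the tripod
  apply hcomp
  refine ⟨R, t₀ + R, t₀, g, ρ, le_rfl, by linarith, hgiso, ?_, ?_, hg0, ?_, ?_⟩
  · intro s t hst htt
    exact hρ s t hst.1 htt.1
  · exact ⟨ht₀R, by linarith⟩
  · -- intersection is {g 0}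
    ext p
    constructor
    · rintro ⟨⟨s, hs, rfl⟩, ⟨w, hw, hpw⟩⟩
      have hs0 : s = 0 := by
        by_contra hs0
        have hspos : 0 < s := lt_of_le_of_ne hs.1 (Ne.symm hs0)
        have h1 : s ≤ Metric.infDist (g s) S := hkey s hs
        have h2 : Metric.infDist (g s) S = 0 := by
          rw [← hpw]
          exact Metric.infDist_zero_of_mem ⟨w, ⟨hw.1, rfl⟩⟩
        linarith
      rw [hs0]; rfl
    · rintro rfl
      exact ⟨⟨0, ⟨le_rfl, le_of_lt hR⟩, rfl⟩,
        ⟨t₀, ⟨ht₀0, by linarith⟩, hg0.symm⟩⟩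
  · -- nearest-point projection
    intro s hs w hw
    have h1 : dist (g s) (ρ t₀) = s := by
      rw [← hg0, hgiso s 0 hs ⟨le_rfl, le_of_lt hR⟩, sub_zero]
      exact abs_of_nonneg hs.1
    have h2 : Metric.infDist (g s) S ≤ dist (g s) (ρ w) :=
      Metric.infDist_le_dist_of_mem ⟨w, hw.1, rfl⟩
    rw [h1]
    exact le_trans (hkey s hs) h2
end

section
/- If X is a path metric space admitting a (1,A)-quasi-isometry to ℝ or to ℝ₊, then every triangle in X is 3A-degenerate: for every triple x, y, z ∈ X, after some relabelling, d(x,y) + d(y,z) ≤ d(x,z) + 3A. Consequently K₃(X) is contained in the 3A-neighborhood of ∂K and does not contain the interior of K. -/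
/-- `K₃(X)` : the set of triples of side-lengths of triangles in `X`. -/
def K3 (X : Type*) [MetricSpace X] : Set (ℝ × ℝ × ℝ) :=
  {p | ∃ x y z : X, dist x y = p.1 ∧ dist y z = p.2.1 ∧ dist z x = p.2.2}

/-- The cone of triples of nonnegative reals satisfying the triangle inequalities. -/
def coneK : Set (ℝ × ℝ × ℝ) :=
  {p | 0 ≤ p.1 ∧ 0 ≤ p.2.1 ∧ 0 ≤ p.2.2 ∧
    p.1 ≤ p.2.1 + p.2.2 ∧ p.2.1 ≤ p.1 + p.2.2 ∧ p.2.2 ≤ p.1 + p.2.1}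

/-- The boundary `∂K` of the cone. -/
def boundaryK : Set (ℝ × ℝ × ℝ) :=
  {p | p ∈ coneK ∧
    (p.1 = p.2.1 + p.2.2 ∨ p.2.1 = p.1 + p.2.2 ∨ p.2.2 = p.1 + p.2.1)}

/-- The interior of the cone `K`. -/
def intK : Set (ℝ × ℝ × ℝ) :=
  {p | 0 < p.1 ∧ 0 < p.2.1 ∧ 0 < p.2.2 ∧
    p.1 < p.2.1 + p.2.2 ∧ p.2.1 < p.1 + p.2.2 ∧ p.2.2 < p.1 + p.2.1}

/-- If a path metric space `X` admits a `(1,A)`-quasi-isometry onto `ℝ` or onto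
`ℝ₊`, then every triangle in `X` is `3A`-degenerate; consequently `K₃(X)` lies
in the `3A`-neighborhood (max-norm) of `∂K` and does not contain the interior
of `K`. -/
theorem K3_of_quasiIsometric_to_line (X : Type*) [MetricSpace X]
    (A : ℝ) (hA : 0 ≤ A)
    -- `X` is a path metric space:
    (hpath : ∀ x y : X, ∀ δ : ℝ, 0 < δ → ∃ γ : ℝ → X,
      ContinuousOn γ (Set.Icc 0 1) ∧ γ 0 = x ∧ γ 1 = y ∧
      eVariationOn γ (Set.Icc 0 1) ≤ ENNReal.ofReal (dist x y + δ))
    -- a `(1,A)`-quasi-isometry from `X` onto `Y = ℝ` or `Y = ℝ₊`: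
    (f : X → ℝ) (Y : Set ℝ) (hY : Y = Set.univ ∨ Y = Set.Ici 0)
    (hrange : ∀ x : X, f x ∈ Y)
    (hup : ∀ x y : X, |f x - f y| ≤ dist x y + A)
    (hlow : ∀ x y : X, dist x y - A ≤ |f x - f y|)
    (hdense : ∀ r ∈ Y, ∃ x : X, |f x - r| ≤ A) :
    (∀ x y z : X,
      dist x y + dist y z ≤ dist x z + 3 * A ∨
      dist y z + dist z x ≤ dist y x + 3 * A ∨
      dist z x + dist x y ≤ dist z y + 3 * A) ∧
    (∀ p ∈ K3 X, ∃ q ∈ boundaryK,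
      max (max |p.1 - q.1| |p.2.1 - q.2.1|) |p.2.2 - q.2.2| ≤ 3 * A) ∧
    ¬ (intK ⊆ K3 X) := by
  have mid : ∀ a b c : X, f a ≤ f b → f b ≤ f c →
      dist a b + dist b c ≤ dist a c + 3 * A := by
    intro a b c hab hbc
    have l1 := hlow a b
    have l2 := hlow b c
    have u3 := hup a c
    have e1 : |f a - f b| = f b - f a := by
      rw [abs_sub_comm]; exact abs_of_nonneg (by linarith)
    have e2 : |f b - f c| = f c - f b := by
      rw [abs_sub_comm]; exact abs_of_nonneg (by linarith)
    have e3 : |f a - f c| = f c - f a := by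
      rw [abs_sub_comm]; exact abs_of_nonneg (by linarith)
    rw [e1] at l1; rw [e2] at l2; rw [e3] at u3
    linarith
  have key : ∀ x y z : X,
      dist x y + dist y z ≤ dist x z + 3 * A ∨
      dist y z + dist z x ≤ dist y x + 3 * A ∨
      dist z x + dist x y ≤ dist z y + 3 * A := by
    intro x y z
    rcases le_total (f x) (f y) with h1 | h1 <;>
      rcases le_total (f y) (f z) with h2 | h2 <;>
      rcases le_total (f x) (f z) with h3 | h3
    · exact Or.inl (mid x y z h1 h2)
    · exact Or.inl (mid x y z h1 h2)
    · -- x ≤ z ≤ y : z middle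
      have h := mid x z y h3 h2
      right; left
      rw [dist_comm y z, dist_comm z x, dist_comm y x]; linarith
    · -- z ≤ x ≤ y : x middle
      exact Or.inr (Or.inr (mid z x y h3 h1))
    · -- y ≤ x ≤ z : x middle
      have h := mid y x z h1 h3
      right; right
      rw [dist_comm z x, dist_comm x y, dist_comm z y]; linarith
    · -- y ≤ z ≤ x : z middle
      exact Or.inr (Or.inl (mid y z x h2 h3))
    · -- impossible-ish but still: z ≤ y ≤ x via h2, h1
      have h := mid z y x h2 h1
      left
      rw [dist_comm x y, dist_comm y z, dist_comm x z]; linarith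
    · have h := mid z y x h2 h1
      left
      rw [dist_comm x y, dist_comm y z, dist_comm x z]; linarith
  refine ⟨key, ?_, ?_⟩
  · rintro p ⟨x, y, z, e1, e2, e3⟩
    have t1 : dist z x ≤ dist z y + dist y x := dist_triangle z y x
    have t2 : dist x y ≤ dist x z + dist z y := dist_triangle x z y
    have t3 : dist y z ≤ dist y x + dist x z := dist_triangle y x z
    have c1 : dist z y = dist y z := dist_comm z y
    have c2 : dist y x = dist x y := dist_comm y x
    have c3 : dist x z = dist z x := dist_comm x z
    rcases key x y z with h | h | h
    · refine ⟨(p.1, p.2.1, p.1 + p.2.1), ⟨⟨?_, ?_, ?_, ?_, ?_, ?_⟩,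
        Or.inr (Or.inr rfl)⟩, ?_⟩
      · rw [← e1]; exact dist_nonneg
      · rw [← e2]; exact dist_nonneg
      · rw [← e1, ← e2]; positivity
      · simp only; rw [← e1, ← e2]; linarith [dist_nonneg (x := y) (y := z)]
      · simp only; rw [← e1, ← e2]; linarith [dist_nonneg (x := x) (y := y)]
      · exact le_rfl
      · simp only [sub_self, abs_zero]
        have : |p.2.2 - (p.1 + p.2.1)| ≤ 3 * A := by
          rw [← e1, ← e2, ← e3, abs_sub_le_iff]
          constructor <;> linarith
        simpa using this
    · refine ⟨(p.2.1 + p.2.2, p.2.1, p.2.2), ⟨⟨?_, ?_, ?_, ?_, ?_, ?_⟩,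
        Or.inl rfl⟩, ?_⟩
      · rw [← e2, ← e3]; positivity
      · rw [← e2]; exact dist_nonneg
      · rw [← e3]; exact dist_nonneg
      · exact le_rfl
      · simp only; rw [← e2, ← e3]; linarith [dist_nonneg (x := z) (y := x)]
      · simp only; rw [← e2, ← e3]; linarith [dist_nonneg (x := y) (y := z)]
      · simp only [sub_self, abs_zero]
        have : |p.1 - (p.2.1 + p.2.2)| ≤ 3 * A := by
          rw [← e1, ← e2, ← e3, abs_sub_le_iff]
          constructor <;> linarith
        simpa using this
    · refine ⟨(p.1, p.1 + p.2.2, p.2.2), ⟨⟨?_, ?_, ?_, ?_, ?_, ?_⟩,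
        Or.inr (Or.inl rfl)⟩, ?_⟩
      · rw [← e1]; exact dist_nonneg
      · rw [← e1, ← e3]; positivity
      · rw [← e3]; exact dist_nonneg
      · simp only; rw [← e1, ← e3]; linarith [dist_nonneg (x := z) (y := x)]
      · exact le_rfl
      · simp only; rw [← e1, ← e3]; linarith [dist_nonneg (x := x) (y := y)]
      · simp only [sub_self, abs_zero]
        have : |p.2.1 - (p.1 + p.2.2)| ≤ 3 * A := by
          rw [← e1, ← e2, ← e3, abs_sub_le_iff]
          constructor <;> linarith
        simpa using this
  · intro hsub
    have hmem : ((3 * A + 1, 3 * A + 1, 3 * A + 1) : ℝ × ℝ × ℝ) ∈ intK := by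
      have h0 : (0 : ℝ) < 3 * A + 1 := by linarith
      have h4 : (3 * A + 1 : ℝ) < (3 * A + 1) + (3 * A + 1) := by linarith
      exact ⟨h0, h0, h0, h4, h4, h4⟩
    obtain ⟨x, y, z, e1, e2, e3⟩ := hsub hmem
    have d1 : dist x y = 3 * A + 1 := e1
    have d2 : dist y z = 3 * A + 1 := e2
    have d3 : dist z x = 3 * A + 1 := e3
    have d4 : dist y x = 3 * A + 1 := by rw [dist_comm]; exact d1
    have d5 : dist z y = 3 * A + 1 := by rw [dist_comm]; exact d2
    have d6 : dist x z = 3 * A + 1 := by rw [dist_comm]; exact d3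
    rcases key x y z with h | h | h <;>
      simp only [d1, d2, d3, d4, d5, d6] at h <;> linarith
end

section
/- Let T = α₁ ∪ α₂ ∪ α₃ be the abstract tripod (three unit segments glued at a common point o). Let S be the subcomplex of T³ consisting of the union over all triples (i,j,k) ∈ {1,2,3}³ of the triangles σ_ijk = {(x,y,z) ∈ αᵢ × αⱼ × α_k : x + y + z = 1} (identifying each leg with [0,1], with o at 0). Then S is homeomorphic to the link of (o,o,o) in T³, and for any pair of distinct indices i ≠ j, the subcomplex S ∩ (αᵢ ∪ αⱼ)³ is homeomorphic to the 2-sphere. -/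
open Set

/-- The three legs of the tripod `T`, embedded in `ℝ²`: three unit segments
emanating from the origin `o = (0,0)` (identified with `[0,1]`, `o` at `0`). -/
def leg : Fin 3 → Set (ℝ × ℝ) :=
  ![{p | p.2 = 0 ∧ 0 ≤ p.1 ∧ p.1 ≤ 1},
    {p | p.1 = 0 ∧ 0 ≤ p.2 ∧ p.2 ≤ 1},
    {p | p.1 = p.2 ∧ -1 ≤ p.1 ∧ p.1 ≤ 0}]

/-- The tripod `T = α₁ ∪ α₂ ∪ α₃`. -/
def tripod : Set (ℝ × ℝ) := leg 0 ∪ leg 1 ∪ leg 2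

/-- The leg coordinate of a point of `T`: its distance to the center along its leg. -/
def ell (p : ℝ × ℝ) : ℝ := max |p.1| |p.2|

/-- The complex `S ⊂ T³`: the union of the triangles
`σ_ijk = {(x,y,z) ∈ αᵢ × αⱼ × α_k : x + y + z = 1}` (leg coordinates). -/
def Scomplex : Set ((ℝ × ℝ) × (ℝ × ℝ) × (ℝ × ℝ)) :=
  {p | p.1 ∈ tripod ∧ p.2.1 ∈ tripod ∧ p.2.2 ∈ tripod ∧
    ell p.1 + ell p.2.1 + ell p.2.2 = 1}

/-- The link of `(o,o,o)` in the cube complex `T³`, realized as the set of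
points of `T³` at `ℓ∞`-radius `1` from the center. -/
def linkOfCenter : Set ((ℝ × ℝ) × (ℝ × ℝ) × (ℝ × ℝ)) :=
  {p | p.1 ∈ tripod ∧ p.2.1 ∈ tripod ∧ p.2.2 ∈ tripod ∧
    max (max (ell p.1) (ell p.2.1)) (ell p.2.2) = 1}

/-! Both `S` and the link lie in the cone `(ℝ≥0 · T)³`, as the level sets `ℓ₁ + ℓ₂ + ℓ₃ = 1` and
`max ℓₖ = 1` of two positively homogeneous functions of the leg coordinates `ℓₖ`, so radial
projection identifies them. For `i ≠ j` the arc `αᵢ ∪ αⱼ` is parametrised by `t ∈ [-1, 1]` with leg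
coordinate `|t|`; this identifies `S ∩ (αᵢ ∪ αⱼ)³` with the unit sphere of the `ℓ¹` norm on `ℝ³`,
which radial projection carries onto the Euclidean unit sphere. -/

noncomputable section

def legEnd : Fin 3 → ℝ × ℝ := ![(1, 0), (0, 1), (-1, -1)]

lemma legEnd_injective : Function.Injective legEnd := by
  intro i j h
  fin_cases i <;> fin_cases j <;> simp_all [legEnd, Prod.ext_iff]

lemma ell_nonneg (p : ℝ × ℝ) : 0 ≤ ell p := le_max_of_le_left (abs_nonneg _)

@[fun_prop]
lemma continuous_ell : Continuous ell := continuous_fst.abs.max continuous_snd.abs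

lemma ell_smul {s : ℝ} (hs : 0 ≤ s) (p : ℝ × ℝ) : ell (s • p) = s * ell p := by
  simp only [ell, Prod.smul_fst, Prod.smul_snd, smul_eq_mul, abs_mul, abs_of_nonneg hs,
    mul_max_of_nonneg _ _ hs]

lemma ell_smul_legEnd {s : ℝ} (hs : 0 ≤ s) (i : Fin 3) : ell (s • legEnd i) = s := by
  rw [ell_smul hs]
  fin_cases i <;> simp [ell, legEnd]

lemma leg_eq_image (i : Fin 3) : leg i = (fun s : ℝ => s • legEnd i) '' Icc 0 1 := by
  ext p
  constructor
  · fin_cases i <;> rintro ⟨h, h0, h1⟩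
    · exact ⟨p.1, ⟨h0, h1⟩, Prod.ext (by simp [legEnd]) (by simp [legEnd, h])⟩
    · exact ⟨p.2, ⟨h0, h1⟩, Prod.ext (by simp [legEnd, h]) (by simp [legEnd])⟩
    · exact ⟨-p.1, ⟨by linarith, by linarith⟩, Prod.ext (by simp [legEnd]) (by simp [legEnd, h])⟩
  · rintro ⟨s, ⟨h0, h1⟩, rfl⟩
    fin_cases i <;> simp [leg, legEnd, h0, h1]

lemma mem_tripod_iff_exists {p : ℝ × ℝ} :
    p ∈ tripod ↔ ∃ i, ∃ s ∈ Icc (0 : ℝ) 1, s • legEnd i = p := by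
  simp only [tripod, mem_union, leg_eq_image, mem_image, Fin.exists_fin_succ, Fin.exists_fin_zero,
    or_false, or_assoc]
  rfl

def tripodCone : Set (ℝ × ℝ) := {p | ∃ i, ∃ s : ℝ, 0 ≤ s ∧ s • legEnd i = p}

lemma smul_mem_tripodCone {p : ℝ × ℝ} (hp : p ∈ tripodCone) {s : ℝ} (hs : 0 ≤ s) :
    s • p ∈ tripodCone := by
  obtain ⟨i, t, ht, rfl⟩ := hp
  exact ⟨i, s * t, mul_nonneg hs ht, mul_smul s t _⟩

lemma mem_tripod_iff {p : ℝ × ℝ} : p ∈ tripod ↔ p ∈ tripodCone ∧ ell p ≤ 1 := by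
  rw [mem_tripod_iff_exists]
  constructor
  · rintro ⟨i, s, ⟨hs0, hs1⟩, rfl⟩
    exact ⟨⟨i, s, hs0, rfl⟩, (ell_smul_legEnd hs0 i).trans_le hs1⟩
  · rintro ⟨⟨i, s, hs0, rfl⟩, h⟩
    exact ⟨i, s, ⟨hs0, (ell_smul_legEnd hs0 i).symm.trans_le h⟩, rfl⟩

section Radial

variable {X : Type*} [MulAction ℝ X] {C : Set X} {f g : X → ℝ}

lemma inv_smul_mem_levelSet (hC : ∀ x ∈ C, ∀ s : ℝ, 0 < s → s • x ∈ C)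
    (hg_smul : ∀ x, ∀ s : ℝ, 0 < s → g (s • x) = s * g x) {x : X} (hx : x ∈ C) (hgx : 0 < g x) :
    (g x)⁻¹ • x ∈ {y | y ∈ C ∧ g y = 1} :=
  ⟨hC x hx _ (inv_pos.2 hgx), by rw [hg_smul x _ (inv_pos.2 hgx), inv_mul_cancel₀ hgx.ne']⟩

lemma inv_smul_inv_smul_of_eq_one (hf_smul : ∀ x, ∀ s : ℝ, 0 < s → f (s • x) = s * f x)
    {x : X} (hfx : f x = 1) {c : ℝ} (hc : 0 < c) : (f (c⁻¹ • x))⁻¹ • c⁻¹ • x = x := by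
  rw [hf_smul x _ (inv_pos.2 hc), hfx, mul_one, inv_inv, smul_smul, mul_inv_cancel₀ hc.ne',
    one_smul]

def radialHomeomorph [TopologicalSpace X] [ContinuousSMul ℝ X]
    (hC : ∀ x ∈ C, ∀ s : ℝ, 0 < s → s • x ∈ C) (hf : Continuous f) (hg : Continuous g)
    (hf_smul : ∀ x, ∀ s : ℝ, 0 < s → f (s • x) = s * f x)
    (hg_smul : ∀ x, ∀ s : ℝ, 0 < s → g (s • x) = s * g x)
    (hfg : ∀ x ∈ C, 0 < f x ↔ 0 < g x) :
    {x | x ∈ C ∧ f x = 1} ≃ₜ {x | x ∈ C ∧ g x = 1} :=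
  have hg_pos (x : {x | x ∈ C ∧ f x = 1}) : 0 < g x := (hfg x x.2.1).1 (x.2.2.symm ▸ one_pos)
  have hf_pos (x : {x | x ∈ C ∧ g x = 1}) : 0 < f x := (hfg x x.2.1).2 (x.2.2.symm ▸ one_pos)
  { toFun x := ⟨(g x)⁻¹ • x, inv_smul_mem_levelSet hC hg_smul x.2.1 (hg_pos x)⟩
    invFun y := ⟨(f y)⁻¹ • y, inv_smul_mem_levelSet hC hf_smul y.2.1 (hf_pos y)⟩
    left_inv x := Subtype.ext (inv_smul_inv_smul_of_eq_one hf_smul x.2.2 (hg_pos x))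
    right_inv y := Subtype.ext (inv_smul_inv_smul_of_eq_one hg_smul y.2.2 (hf_pos y))
    continuous_toFun :=
      (((hg.comp continuous_subtype_val).inv₀ fun x => (hg_pos x).ne').smul
        continuous_subtype_val).subtype_mk _
    continuous_invFun :=
      (((hf.comp continuous_subtype_val).inv₀ fun y => (hf_pos y).ne').smul
        continuous_subtype_val).subtype_mk _ }

end Radial

def tripodCone3 : Set ((ℝ × ℝ) × (ℝ × ℝ) × (ℝ × ℝ)) :=
  {p | p.1 ∈ tripodCone ∧ p.2.1 ∈ tripodCone ∧ p.2.2 ∈ tripodCone}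

def ellSum (p : (ℝ × ℝ) × (ℝ × ℝ) × (ℝ × ℝ)) : ℝ := ell p.1 + ell p.2.1 + ell p.2.2

def ellMax (p : (ℝ × ℝ) × (ℝ × ℝ) × (ℝ × ℝ)) : ℝ := max (max (ell p.1) (ell p.2.1)) (ell p.2.2)

lemma Scomplex_eq : Scomplex = {p | p ∈ tripodCone3 ∧ ellSum p = 1} := by
  ext p
  have := ell_nonneg p.1; have := ell_nonneg p.2.1; have := ell_nonneg p.2.2
  simp only [Scomplex, tripodCone3, ellSum, mem_tripod_iff]
  constructor
  · rintro ⟨⟨h1, -⟩, ⟨h2, -⟩, ⟨h3, -⟩, h⟩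
    exact ⟨⟨h1, h2, h3⟩, h⟩
  · rintro ⟨⟨h1, h2, h3⟩, h⟩
    exact ⟨⟨h1, by linarith⟩, ⟨h2, by linarith⟩, ⟨h3, by linarith⟩, h⟩

lemma linkOfCenter_eq : linkOfCenter = {p | p ∈ tripodCone3 ∧ ellMax p = 1} := by
  ext p
  simp only [linkOfCenter, tripodCone3, ellMax, mem_tripod_iff]
  constructor
  · rintro ⟨⟨h1, -⟩, ⟨h2, -⟩, ⟨h3, -⟩, h⟩
    exact ⟨⟨h1, h2, h3⟩, h⟩
  · rintro ⟨⟨h1, h2, h3⟩, h⟩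
    obtain ⟨⟨le1, le2⟩, le3⟩ : (ell p.1 ≤ 1 ∧ ell p.2.1 ≤ 1) ∧ ell p.2.2 ≤ 1 := by
      simpa only [max_le_iff] using h.le
    exact ⟨⟨h1, le1⟩, ⟨h2, le2⟩, ⟨h3, le3⟩, h⟩

lemma smul_mem_tripodCone3 {p : (ℝ × ℝ) × (ℝ × ℝ) × (ℝ × ℝ)} (hp : p ∈ tripodCone3) {s : ℝ}
    (hs : 0 ≤ s) : s • p ∈ tripodCone3 :=
  ⟨smul_mem_tripodCone hp.1 hs, smul_mem_tripodCone hp.2.1 hs, smul_mem_tripodCone hp.2.2 hs⟩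

lemma continuous_ellSum : Continuous ellSum := by
  unfold ellSum; fun_prop

lemma continuous_ellMax : Continuous ellMax := by
  unfold ellMax; fun_prop

lemma ellSum_smul {s : ℝ} (hs : 0 ≤ s) (p : (ℝ × ℝ) × (ℝ × ℝ) × (ℝ × ℝ)) :
    ellSum (s • p) = s * ellSum p := by
  simp only [ellSum, Prod.smul_fst, Prod.smul_snd, ell_smul hs, mul_add]

lemma ellMax_smul {s : ℝ} (hs : 0 ≤ s) (p : (ℝ × ℝ) × (ℝ × ℝ) × (ℝ × ℝ)) :
    ellMax (s • p) = s * ellMax p := by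
  simp only [ellMax, Prod.smul_fst, Prod.smul_snd, ell_smul hs, mul_max_of_nonneg _ _ hs]

lemma ellSum_pos_iff_ellMax_pos (p : (ℝ × ℝ) × (ℝ × ℝ) × (ℝ × ℝ)) :
    0 < ellSum p ↔ 0 < ellMax p := by
  have := ell_nonneg p.1; have := ell_nonneg p.2.1; have := ell_nonneg p.2.2
  simp only [ellSum, ellMax, lt_max_iff]
  constructor
  · intro h; by_contra! h'; linarith
  · rintro ((h | h) | h) <;> linarith

def scomplexHomeomorphLinkOfCenter : Scomplex ≃ₜ linkOfCenter :=
  (Homeomorph.setCongr Scomplex_eq).trans <|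
    (radialHomeomorph
      (fun _ hp _ hs => smul_mem_tripodCone3 hp hs.le)
      continuous_ellSum continuous_ellMax (fun p _ hs => ellSum_smul hs.le p)
      (fun p _ hs => ellMax_smul hs.le p) (fun p _ => ellSum_pos_iff_ellMax_pos p)).trans <|
    Homeomorph.setCongr linkOfCenter_eq.symm

section L1Sphere

variable {ι : Type*} [Fintype ι]

def l1Sphere (ι : Type*) [Fintype ι] : Set (EuclideanSpace ℝ ι) := {u | ∑ k, |u k| = 1}

lemma abs_le_one_of_mem_l1Sphere {u : EuclideanSpace ℝ ι} (hu : u ∈ l1Sphere ι) (k : ι) :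
    |u k| ≤ 1 :=
  hu ▸ Finset.single_le_sum (fun k _ => abs_nonneg (u k)) (Finset.mem_univ k)

lemma sum_abs_pos_iff (u : EuclideanSpace ℝ ι) : 0 < ∑ k, |u k| ↔ u ≠ 0 := by
  rw [Finset.sum_pos_iff_of_nonneg fun k _ => abs_nonneg (u k), Ne, ← WithLp.ofLp_eq_zero,
    funext_iff]
  simp

def l1SphereHomeomorphSphere : l1Sphere ι ≃ₜ Metric.sphere (0 : EuclideanSpace ℝ ι) 1 :=
  (Homeomorph.setCongr (by simp [l1Sphere])).trans <|
    (radialHomeomorph (C := univ) (f := fun u => ∑ k, |u k|) (fun _ _ _ _ => mem_univ _)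
      (by fun_prop) continuous_norm
      (fun u s hs => by simp [abs_mul, abs_of_pos hs, Finset.mul_sum])
      (fun u s hs => by rw [norm_smul, Real.norm_of_nonneg hs.le])
      (fun u _ => by rw [sum_abs_pos_iff, norm_pos_iff])).trans <|
    Homeomorph.setCongr (by ext; simp)

end L1Sphere

section Arc

def legArc (i j : Fin 3) (t : ℝ) : ℝ × ℝ := max t 0 • legEnd i + max (-t) 0 • legEnd j

variable {i j : Fin 3} {t : ℝ}

@[fun_prop]
lemma continuous_legArc : Continuous (legArc i j) := by
  unfold legArc; fun_prop

lemma legArc_of_nonneg (ht : 0 ≤ t) : legArc i j t = t • legEnd i := by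
  simp [legArc, ht]

lemma legArc_of_nonpos (ht : t ≤ 0) : legArc i j t = (-t) • legEnd j := by
  simp [legArc, ht]

lemma ell_legArc : ell (legArc i j t) = |t| := by
  rcases le_total 0 t with ht | ht
  · rw [legArc_of_nonneg ht, ell_smul_legEnd ht, abs_of_nonneg ht]
  · rw [legArc_of_nonpos ht, ell_smul_legEnd (neg_nonneg.2 ht), abs_of_nonpos ht]

lemma eq_zero_of_smul_legEnd_eq (hij : i ≠ j) {s : ℝ} (h : s • legEnd i = s • legEnd j) :
    s = 0 := by
  by_contra hs
  exact hij (legEnd_injective (smul_right_injective _ hs h))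

lemma legArc_injective (hij : i ≠ j) : Function.Injective (legArc i j) := by
  intro s t hst
  have habs : |s| = |t| := by rw [← ell_legArc (i := i) (j := j), hst, ell_legArc]
  rcases le_total 0 s with hs | hs <;> rcases le_total 0 t with ht | ht
  · rwa [abs_of_nonneg hs, abs_of_nonneg ht] at habs
  · rw [abs_of_nonneg hs, abs_of_nonpos ht] at habs
    rw [legArc_of_nonneg hs, legArc_of_nonpos ht, ← habs] at hst
    linarith [eq_zero_of_smul_legEnd_eq hij hst]
  · rw [abs_of_nonpos hs, abs_of_nonneg ht] at habs
    rw [legArc_of_nonpos hs, legArc_of_nonneg ht, habs] at hst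
    linarith [eq_zero_of_smul_legEnd_eq hij hst.symm]
  · rw [abs_of_nonpos hs, abs_of_nonpos ht] at habs
    exact neg_inj.1 habs

lemma bijOn_legArc (hij : i ≠ j) : BijOn (legArc i j) (Icc (-1) 1) (leg i ∪ leg j) := by
  refine ⟨fun t ⟨h₁, h₂⟩ => ?_, (legArc_injective hij).injOn, fun p hp => ?_⟩
  · rcases le_total 0 t with ht | ht
    · rw [legArc_of_nonneg ht, mem_union, leg_eq_image]
      exact Or.inl ⟨t, ⟨ht, h₂⟩, rfl⟩
    · rw [legArc_of_nonpos ht, mem_union, leg_eq_image, leg_eq_image]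
      exact Or.inr ⟨-t, ⟨neg_nonneg.2 ht, by linarith⟩, rfl⟩
  · rw [leg_eq_image, leg_eq_image] at hp
    rcases hp with ⟨s, ⟨hs₀, hs₁⟩, rfl⟩ | ⟨s, ⟨hs₀, hs₁⟩, rfl⟩
    · exact ⟨s, ⟨by linarith, hs₁⟩, legArc_of_nonneg hs₀⟩
    · exact ⟨-s, ⟨by linarith, by linarith⟩, by rw [legArc_of_nonpos (by linarith), neg_neg]⟩

end Arc

section PairSubcomplex

variable {i j : Fin 3}

def pairSubcomplex (i j : Fin 3) : Set ((ℝ × ℝ) × (ℝ × ℝ) × (ℝ × ℝ)) :=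
  {p | p ∈ Scomplex ∧ p.1 ∈ leg i ∪ leg j ∧ p.2.1 ∈ leg i ∪ leg j ∧ p.2.2 ∈ leg i ∪ leg j}

def legArc3 (i j : Fin 3) (u : EuclideanSpace ℝ (Fin 3)) : (ℝ × ℝ) × (ℝ × ℝ) × (ℝ × ℝ) :=
  (legArc i j (u 0), legArc i j (u 1), legArc i j (u 2))

lemma continuous_legArc3 : Continuous (legArc3 i j) := by
  unfold legArc3; fun_prop

lemma leg_union_subset_tripod : leg i ∪ leg j ⊆ tripod := fun p hp =>
  mem_tripod_iff_exists.2 <| by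
    rcases hp with hp | hp <;> rw [leg_eq_image] at hp <;> obtain ⟨s, hs, rfl⟩ := hp
    exacts [⟨i, s, hs, rfl⟩, ⟨j, s, hs, rfl⟩]

lemma bijOn_legArc3 (hij : i ≠ j) :
    BijOn (legArc3 i j) (l1Sphere (Fin 3)) (pairSubcomplex i j) := by
  have harc := bijOn_legArc hij
  refine ⟨fun u hu => ?_, fun u _ v _ huv => ?_, fun p hp => ?_⟩
  · have hmem (k : Fin 3) : legArc i j (u k) ∈ leg i ∪ leg j :=
      harc.mapsTo (abs_le.1 (abs_le_one_of_mem_l1Sphere hu k))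
    refine ⟨⟨leg_union_subset_tripod (hmem 0), leg_union_subset_tripod (hmem 1),
      leg_union_subset_tripod (hmem 2), ?_⟩, hmem 0, hmem 1, hmem 2⟩
    simpa [legArc3, ell_legArc, l1Sphere, Fin.sum_univ_three] using hu
  · simp only [legArc3, Prod.mk.injEq] at huv
    ext k
    fin_cases k
    exacts [legArc_injective hij huv.1, legArc_injective hij huv.2.1, legArc_injective hij huv.2.2]
  · obtain ⟨p₁, p₂, p₃⟩ := p
    obtain ⟨⟨-, -, -, hsum⟩, h₁, h₂, h₃⟩ := hp
    obtain ⟨t₁, -, rfl⟩ := harc.surjOn h₁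
    obtain ⟨t₂, -, rfl⟩ := harc.surjOn h₂
    obtain ⟨t₃, -, rfl⟩ := harc.surjOn h₃
    refine ⟨!₂[t₁, t₂, t₃], ?_, rfl⟩
    simpa [l1Sphere, Fin.sum_univ_three, ell_legArc] using hsum

def l1SphereHomeomorphPairSubcomplex (hij : i ≠ j) : l1Sphere (Fin 3) ≃ₜ pairSubcomplex i j :=
  haveI : CompactSpace (l1Sphere (Fin 3)) := l1SphereHomeomorphSphere.symm.compactSpace
  Continuous.homeoOfEquivCompactToT2 (f := (bijOn_legArc3 hij).equiv _)
    ((continuous_legArc3.comp continuous_subtype_val).subtype_mk _)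

end PairSubcomplex

end

/-- `S` is homeomorphic to the link of `(o,o,o)` in `T³`, and for distinct legs
`i ≠ j` the subcomplex `S ∩ (αᵢ ∪ αⱼ)³` is homeomorphic to the 2-sphere. -/
theorem Scomplex_homeo_link_and_spheres :
    Nonempty (Scomplex ≃ₜ linkOfCenter) ∧
    ∀ i j : Fin 3, i ≠ j →
      Nonempty
        (({p : (ℝ × ℝ) × (ℝ × ℝ) × (ℝ × ℝ) | p ∈ Scomplex ∧
            p.1 ∈ leg i ∪ leg j ∧ p.2.1 ∈ leg i ∪ leg j ∧ p.2.2 ∈ leg i ∪ leg j} : Set _) ≃ₜ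
          Metric.sphere (0 : EuclideanSpace ℝ (Fin 3)) 1) :=
  ⟨⟨scomplexHomeomorphLinkOfCenter⟩, fun _ _ hij =>
    ⟨(l1SphereHomeomorphPairSubcomplex hij).symm.trans l1SphereHomeomorphSphere⟩⟩
end
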